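/- (Axial generalized structure factor of a twisted wave.) Let α ∈ ℤ, β ∈ ℝ, γ > 0 and n ∈ ℂ³, let E₀ be the twisted wave with parameters (α,β,γ) and polarization vector n, let ρ : ℝ³ → ℂ be integrable, and let Z ∈ ℝ. Then ∫_{ℝ³} E₀(y) ρ(y) e^{−i Z y₃} dy = N(n) v, where v ∈ ℂ³ has components v_j = ∫_{ℝ³} ρ(y) e^{i((α+σ_j) φ(y) + (β − Z) y₃)} J_{α+σ_j}(γ r(y)) dy for j = 1, 2, 3, with σ₁ = 1, σ₂ = −1, σ₃ = 0, and (r(y), φ(y)) the polar coordinates of (y₁, y₂) (i.e. y₁ = r(y) cos φ(y), y₂ = r(y) sin φ(y), r(y) > 0). -/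

import Mathlib

noncomputable section

open Real MeasureTheory

abbrev V3 : Type := Fin 3 → ℝ
abbrev C3 : Type := Fin 3 → ℂ

/-- Partial derivative of a scalar field in the `i`-th coordinate direction. -/
def pd (i : Fin 3) (f : V3 → ℂ) (x : V3) : ℂ := fderiv ℝ f x (Pi.single i 1)

/-- Componentwise Laplacian of a scalar field. -/
def lap (f : V3 → ℂ) (x : V3) : ℂ := ∑ i, pd i (pd i f) x

/-- Rotation by angle `θ` about the `e₃` axis. -/
def Rot (θ : ℝ) : Matrix (Fin 3) (Fin 3) ℝ :=
  !![Real.cos θ, -Real.sin θ, 0; Real.sin θ, Real.cos θ, 0; 0, 0, 1]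

/-- Complexified rotation matrix. -/
def RotC (θ : ℝ) : Matrix (Fin 3) (Fin 3) ℂ := (Rot θ).map (fun a => (a : ℂ))

/-- The polarization tensor N(n). -/
def Nmat (n : C3) : Matrix (Fin 3) (Fin 3) ℂ :=
  !![(n 0 + Complex.I * n 1)/2, (n 0 - Complex.I * n 1)/2, 0;
     (n 1 - Complex.I * n 0)/2, (n 1 + Complex.I * n 0)/2, 0;
     0, 0, n 2]

/-- Bessel function of integer order, via the Bessel integral
`J_ν(A) = (1/2π) ∫₀^{2π} e^{i(νφ − A sin φ)} dφ`. -/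
def besselJ (ν : ℤ) (A : ℝ) : ℂ :=
  (1/(2*Real.pi)) * ∫ φ in (0:ℝ)..(2*Real.pi),
    Complex.exp (Complex.I * (((ν : ℝ) * φ - A * Real.sin φ : ℝ) : ℂ))

/-- The Bessel vector `(J_{α+1}(γr), J_{α−1}(γr), J_α(γr))`. -/
def Jvec (α : ℤ) (γ r : ℝ) : C3 :=
  ![besselJ (α+1) (γ*r), besselJ (α-1) (γ*r), besselJ α (γ*r)]

/-- Twisted wave with parameters `(α, β, γ)` and polarization vector `n`,
expressed in cylindrical coordinates:
`E₀ = e^{i(αφ+βz)} R_φ N(n) (J_{α+1}(γr), J_{α−1}(γr), J_α(γr))ᵀ`. -/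
def twistedCyl (α : ℤ) (β γ : ℝ) (n : C3) (r φ z : ℝ) : C3 :=
  Complex.exp (Complex.I * (((α : ℝ) * φ + β * z : ℝ) : ℂ)) •
    (RotC φ).mulVec ((Nmat n).mulVec (Jvec α γ r))

/-- Radial polar coordinate of the first two components. -/
def polarR (y : V3) : ℝ := Real.sqrt (y 0 ^ 2 + y 1 ^ 2)

/-- Angular polar coordinate of the first two components. -/
def polarPhi (y : V3) : ℝ := Complex.arg ((y 0 : ℂ) + Complex.I * (y 1 : ℂ))

/-- The shifts σ = (1, −1, 0). -/
def sgn3 : Fin 3 → ℤ := ![1, -1, 0]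

/-!
The columns of `N(n)` are eigenvectors of every rotation `R_φ` about `e₃`, with eigenvalues
`e^{iφ}, e^{-iφ}, 1`: `R_φ N(n) = N(n) diag(e^{iσ_j φ})`. Hence, off the axis,
`E₀(y) e^{-iZy₃} = N(n) (e^{i((α+σ_j)φ + (β-Z)y₃)} J_{α+σ_j}(γr))_j`, and the theorem follows
by integrating against `ρ`: the axis is a null set, and each component is integrable because
`|J_ν| ≤ 1`.
-/

theorem RotC_mul_Nmat (φ : ℝ) (n : C3) :
    RotC φ * Nmat n =
      Nmat n * Matrix.diagonal fun j => Complex.exp (Complex.I * ((sgn3 j * φ : ℝ) : ℂ)) := by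
  have hplus : Complex.exp (Complex.I * φ) = Complex.cos φ + Complex.sin φ * Complex.I := by
    rw [mul_comm, Complex.exp_mul_I]
  have hminus : Complex.exp (-(Complex.I * φ)) = Complex.cos φ - Complex.sin φ * Complex.I := by
    rw [← mul_neg, mul_comm, Complex.exp_mul_I, Complex.cos_neg, Complex.sin_neg, neg_mul,
      sub_eq_add_neg]
  ext i j
  fin_cases i <;> fin_cases j <;>
    simp [Matrix.mul_apply, Fin.sum_univ_three, RotC, Rot, Nmat, sgn3, hplus, hminus] <;>
    ring_nf <;> simp only [Complex.I_sq] <;> ring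

theorem Jvec_eq_besselJ (α : ℤ) (γ r : ℝ) :
    Jvec α γ r = fun j => besselJ (α + sgn3 j) (γ * r) := by
  ext j
  fin_cases j <;> simp [Jvec, sgn3, sub_eq_add_neg]

theorem twistedCyl_apply (α : ℤ) (β γ : ℝ) (n : C3) (r φ z : ℝ) (i : Fin 3) :
    twistedCyl α β γ n r φ z i = ∑ j, Nmat n i j *
      (Complex.exp (Complex.I * ((((α + sgn3 j : ℤ) : ℝ) * φ + β * z : ℝ) : ℂ)) *
        besselJ (α + sgn3 j) (γ * r)) := by
  have hphase : ∀ j, Complex.exp (Complex.I * (((α : ℝ) * φ + β * z : ℝ) : ℂ)) *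
      Complex.exp (Complex.I * ((sgn3 j * φ : ℝ) : ℂ)) =
      Complex.exp (Complex.I * ((((α + sgn3 j : ℤ) : ℝ) * φ + β * z : ℝ) : ℂ)) := fun j => by
    rw [← Complex.exp_add]; push_cast; ring_nf
  rw [twistedCyl, Matrix.mulVec_mulVec, RotC_mul_Nmat, ← Matrix.mulVec_mulVec, Pi.smul_apply,
    smul_eq_mul, Matrix.mulVec, dotProduct, Finset.mul_sum]
  refine Finset.sum_congr rfl fun j _ => ?_
  rw [Matrix.mulVec_diagonal, Jvec_eq_besselJ, ← hphase]
  ring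

theorem twistedCyl_apply_mul_exp (α : ℤ) (β γ : ℝ) (n : C3) (r φ z Z : ℝ) (c : ℂ) (i : Fin 3) :
    twistedCyl α β γ n r φ z i * c * Complex.exp (-Complex.I * ((Z * z : ℝ) : ℂ)) =
      ∑ j, Nmat n i j * (c *
        Complex.exp (Complex.I * ((((α + sgn3 j : ℤ) : ℝ) * φ + (β - Z) * z : ℝ) : ℂ)) *
        besselJ (α + sgn3 j) (γ * r)) := by
  rw [twistedCyl_apply, Finset.sum_mul, Finset.sum_mul]
  refine Finset.sum_congr rfl fun j _ => ?_
  have hphase : Complex.exp (Complex.I * ((((α + sgn3 j : ℤ) : ℝ) * φ + (β - Z) * z : ℝ) : ℂ)) =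
      Complex.exp (Complex.I * ((((α + sgn3 j : ℤ) : ℝ) * φ + β * z : ℝ) : ℂ)) *
        Complex.exp (-Complex.I * ((Z * z : ℝ) : ℂ)) := by
    rw [← Complex.exp_add]; push_cast; ring_nf
  rw [hphase]
  ring

theorem polarR_pos {y : V3} (hy : y 0 ≠ 0) : 0 < polarR y :=
  Real.sqrt_pos.mpr (by positivity)

theorem polar_repr (y : V3) :
    ![polarR y * Real.cos (polarPhi y), polarR y * Real.sin (polarPhi y), y 2] = y := by
  have hnorm : polarR y = ‖(y 0 : ℂ) + Complex.I * (y 1 : ℂ)‖ := by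
    simp [polarR, Complex.norm_def, Complex.normSq_apply, sq]
  ext k
  fin_cases k
  · simp [hnorm, polarPhi, Complex.norm_mul_cos_arg]
  · simp [hnorm, polarPhi, Complex.norm_mul_sin_arg]
  · rfl

theorem ae_off_axis : ∀ᵐ y : V3, y 0 ≠ 0 := by
  simpa only [← volume_pi] using Measure.ae_eval_ne (fun _ : Fin 3 => (volume : Measure ℝ)) 0 0

@[fun_prop]
theorem measurable_polarPhi : Measurable polarPhi :=
  Complex.measurable_arg.comp (by fun_prop)

@[fun_prop]
theorem measurable_polarR : Measurable polarR :=
  (by unfold polarR; fun_prop : Continuous polarR).measurable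

theorem continuous_besselJ (ν : ℤ) : Continuous (besselJ ν) := by
  unfold besselJ
  refine continuous_const.mul ?_
  apply intervalIntegral.continuous_parametric_intervalIntegral_of_continuous'
  fun_prop

theorem norm_besselJ_le_one (ν : ℤ) (A : ℝ) : ‖besselJ ν A‖ ≤ 1 := by
  have hint : ‖∫ φ in (0:ℝ)..(2*π),
      Complex.exp (Complex.I * (((ν : ℝ) * φ - A * Real.sin φ : ℝ) : ℂ))‖ ≤ 1 * |2*π - 0| :=
    intervalIntegral.norm_integral_le_of_norm_le_const fun φ _ =>
      (Complex.norm_exp_I_mul_ofReal _).le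
  have hπ := Real.pi_pos
  rw [besselJ, norm_mul, norm_div, norm_one, Complex.norm_mul, Complex.norm_ofNat,
    Complex.norm_real, Real.norm_of_nonneg hπ.le]
  rw [one_mul, sub_zero, abs_of_pos (by positivity)] at hint
  calc 1 / (2 * π) * _ ≤ 1 / (2 * π) * (2 * π) := by gcongr
    _ = 1 := by field_simp

theorem MeasureTheory.Integrable.mul_exp_mul_besselJ {X : Type*} [MeasurableSpace X] {μ : Measure X}
    {ρ : X → ℂ} (hρ : Integrable ρ μ) (ν : ℤ) {θ R : X → ℝ} (hθ : Measurable θ)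
    (hR : Measurable R) :
    Integrable (fun x => ρ x * Complex.exp (Complex.I * (θ x : ℂ)) * besselJ ν (R x)) μ := by
  simp only [mul_assoc]
  refine hρ.mul_bdd (c := 1) ?_ (Filter.Eventually.of_forall fun x => ?_)
  · exact (((Complex.measurable_ofReal.comp hθ).const_mul _).cexp.mul
      ((continuous_besselJ ν).measurable.comp hR)).aestronglyMeasurable
  · rw [norm_mul, Complex.norm_exp_I_mul_ofReal, one_mul]
    exact norm_besselJ_le_one ν (R x)

theorem axial_structure_factor
    (α : ℤ) (β γ : ℝ) (n : C3)
    (E : V3 → C3)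
    (hE : ∀ r φ z : ℝ, 0 < r →
      E ![r * Real.cos φ, r * Real.sin φ, z] = twistedCyl α β γ n r φ z)
    (ρ : V3 → ℂ) (hρ : Integrable ρ) (Z : ℝ) :
    ∀ i : Fin 3,
      (∫ y : V3, E y i * ρ y * Complex.exp (-Complex.I * ((Z * y 2 : ℝ) : ℂ))) =
      ∑ j, Nmat n i j *
        ∫ y : V3, ρ y *
          Complex.exp (Complex.I *
            ((((α + sgn3 j : ℤ) : ℝ) * polarPhi y + (β - Z) * y 2 : ℝ) : ℂ)) *
          besselJ (α + sgn3 j) (γ * polarR y) := by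
  intro i
  have hpointwise : ∀ᵐ y : V3, E y i * ρ y * Complex.exp (-Complex.I * ((Z * y 2 : ℝ) : ℂ)) =
      ∑ j, Nmat n i j * (ρ y *
        Complex.exp (Complex.I *
          ((((α + sgn3 j : ℤ) : ℝ) * polarPhi y + (β - Z) * y 2 : ℝ) : ℂ)) *
        besselJ (α + sgn3 j) (γ * polarR y)) := by
    filter_upwards [ae_off_axis] with y hy
    have hEy : E y = twistedCyl α β γ n (polarR y) (polarPhi y) (y 2) := by
      simpa only [polar_repr] using hE (polarR y) (polarPhi y) (y 2) (polarR_pos hy)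
    rw [hEy, twistedCyl_apply_mul_exp]
  rw [integral_congr_ae hpointwise, integral_finsetSum]
  · simp only [integral_const_mul]
  · exact fun j _ => (hρ.mul_exp_mul_besselJ _ (by fun_prop) (by fun_prop)).const_mul _
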